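/- arXiv:1301.4587 — 10 statements merged into one kernel-verified Lean document; each statement's English description precedes it below -/
import Mathlib

section
/- Let p be a prime and A an n×n matrix over F_p = ZMod p. If the iteration x(t+1) = A x(t) achieves consensus, then A is either nilpotent (A^n = 0) or row-stochastic (A 𝟙 = 𝟙). -/
open Matrix

/-- If the iteration `x(t+1) = A x(t)` over `ZMod p` achieves consensus, then
`A` is either nilpotent (`A ^ n = 0`) or row-stochastic (`A *ᵥ 𝟙 = 𝟙`). -/
theorem finiteField_consensus_nilpotent_or_row_stochastic
    (p n : ℕ) [Fact p.Prime]
    (A : Matrix (Fin n) (Fin n) (ZMod p))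
    (h : ∀ x0 : Fin n → ZMod p, ∃ T : ℕ, ∃ α : ZMod p,
      ∀ t ≥ T, (A ^ t) *ᵥ x0 = α • (1 : Fin n → ZMod p)) :
    A ^ n = 0 ∨ A *ᵥ (1 : Fin n → ZMod p) = 1 := by
  by_cases hA : A *ᵥ (1 : Fin n → ZMod p) = 1
  · exact Or.inr hA
  left
  -- there is a coordinate where A *ᵥ 1 differs from 1
  obtain ⟨j0, hj0⟩ : ∃ j, (A *ᵥ (1 : Fin n → ZMod p)) j ≠ 1 := by
    by_contra hc
    push_neg at hc
    exact hA (funext fun j => by simpa using hc j)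
  -- every trajectory eventually vanishes
  have key : ∀ x0 : Fin n → ZMod p, ∃ T : ℕ, ∀ t ≥ T, (A ^ t) *ᵥ x0 = 0 := by
    intro x0
    obtain ⟨T, α, hT⟩ := h x0
    have h1 := hT T le_rfl
    have h2 := hT (T + 1) (Nat.le_succ T)
    have h3 : (A ^ (T + 1)) *ᵥ x0 = A *ᵥ ((A ^ T) *ᵥ x0) := by
      rw [pow_succ', mulVec_mulVec]
    have h4 : α • (A *ᵥ (1 : Fin n → ZMod p)) = α • (1 : Fin n → ZMod p) := by
      have : A *ᵥ (α • (1 : Fin n → ZMod p)) = α • (1 : Fin n → ZMod p) := by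
        conv_lhs => rw [← h1]
        rw [← h3]; exact h2
      rwa [mulVec_smul] at this
    have hα : α = 0 := by
      by_contra hne
      apply hj0
      have := congrFun h4 j0
      simp only [Pi.smul_apply, Pi.one_apply, smul_eq_mul, mul_one] at this
      exact mul_left_cancel₀ hne (by simpa using this)
    refine ⟨T, fun t ht => ?_⟩
    rw [hT t ht, hα, zero_smul]
  -- choose a vanishing time for each basis vector
  choose T hT using fun j => key (Pi.single j 1)
  set N : ℕ := (Finset.univ : Finset (Fin n)).sup T with hN
  have hAN : A ^ N = 0 := by
    ext i j
    have := congrFun (hT j N (Finset.le_sup (Finset.mem_univ j))) i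
    simpa [mulVec_single] using this
  have hnil : IsNilpotent A := ⟨N, hAN⟩
  -- Cayley–Hamilton: the charpoly of a nilpotent matrix over a domain is X^n
  have hcp : A.charpoly = Polynomial.X ^ n := by
    have h5 := Matrix.isNilpotent_charpoly_sub_pow_of_isNilpotent hnil
    have h6 := h5.eq_zero
    rw [sub_eq_zero] at h6
    simpa using h6
  have := A.aeval_self_charpoly
  rw [hcp] at this
  simpa using this
end

section
/- Let p be a prime and A a row-stochastic n×n matrix over F_p = ZMod p. Then the iteration x(t+1) = A x(t) achieves consensus if and only if every periodic point of the linear map x ↦ A x is a consensus vector, i.e., for every x ∈ F_p^n and every k ≥ 1, if A^k x = x then x = α • 𝟙 for some α ∈ F_p. (Equivalently, the transition graph of the iteration contains exactly p cycles, namely the unitary cycles at the p vertices α·𝟙, α ∈ F_p, which are fixed points since A is row-stochastic.) -/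
open Matrix

/-- A row-stochastic matrix over `ZMod p` achieves consensus if and only if
every periodic point of the map `x ↦ A *ᵥ x` is a consensus vector `α • 𝟙`. -/
theorem finiteField_consensus_iff_periodic_points_are_consensus
    (p n : ℕ) [Fact p.Prime]
    (A : Matrix (Fin n) (Fin n) (ZMod p))
    (hA : A *ᵥ (1 : Fin n → ZMod p) = 1) :
    (∀ x0 : Fin n → ZMod p, ∃ T : ℕ, ∃ α : ZMod p,
      ∀ t ≥ T, (A ^ t) *ᵥ x0 = α • (1 : Fin n → ZMod p)) ↔
    (∀ (x : Fin n → ZMod p) (k : ℕ), 1 ≤ k → (A ^ k) *ᵥ x = x →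
      ∃ α : ZMod p, x = α • (1 : Fin n → ZMod p)) := by
  have hpow1 : ∀ m : ℕ, (A ^ m) *ᵥ (1 : Fin n → ZMod p) = 1 := by
    intro m
    induction m with
    | zero => simp
    | succ m ih => rw [pow_succ, ← mulVec_mulVec, hA, ih]
  constructor
  · intro hcons x k hk hx
    have hmul : ∀ m : ℕ, (A ^ (k * m)) *ᵥ x = x := by
      intro m
      induction m with
      | zero => simp
      | succ m ih => rw [Nat.mul_succ, pow_add, ← mulVec_mulVec, hx, ih]
    obtain ⟨T, α, hT⟩ := hcons x
    refine ⟨α, ?_⟩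
    have h := hT (k * T) (Nat.le_mul_of_pos_left T hk)
    rw [hmul T] at h
    exact h
  · intro hper x0
    obtain ⟨i, j, hne, hij⟩ :=
      Finite.exists_ne_map_eq_of_infinite (fun t : ℕ => A ^ t)
    rcases hne.lt_or_gt with hlt | hlt
    case _ =>
      -- i < j
      set d := j - i with hd
      have hd1 : 1 ≤ d := Nat.le_sub_of_add_le (by omega)
      have hAd : A ^ (d + i) = A ^ i := by
        rw [← Nat.sub_add_cancel hlt.le] at hij
        exact hij.symm
      set y := (A ^ i) *ᵥ x0 with hy
      have hyp : (A ^ d) *ᵥ y = y := by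
        rw [hy, mulVec_mulVec, ← pow_add, hAd]
      obtain ⟨α, hα⟩ := hper y d hd1 hyp
      refine ⟨i, α, fun t ht => ?_⟩
      have : A ^ t = A ^ (t - i) * A ^ i := by
        rw [← pow_add, Nat.sub_add_cancel ht]
      rw [this, ← mulVec_mulVec, ← hy, hα, mulVec_smul, hpow1]
    case _ =>
      -- j < i
      set d := i - j with hd
      have hd1 : 1 ≤ d := Nat.le_sub_of_add_le (by omega)
      have hAd : A ^ (d + j) = A ^ j := by
        rw [← Nat.sub_add_cancel hlt.le] at hij
        exact hij
      set y := (A ^ j) *ᵥ x0 with hy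
      have hyp : (A ^ d) *ᵥ y = y := by
        rw [hy, mulVec_mulVec, ← pow_add, hAd]
      obtain ⟨α, hα⟩ := hper y d hd1 hyp
      refine ⟨j, α, fun t ht => ?_⟩
      have : A ^ t = A ^ (t - j) * A ^ j := by
        rw [← pow_add, Nat.sub_add_cancel ht]
      rw [this, ← mulVec_mulVec, ← hy, hα, mulVec_smul, hpow1]
end

section
/- Let p be a prime, n ≥ 1, and A a row-stochastic n×n matrix over F_p = ZMod p. For α ∈ F_p and t ∈ ℕ let S_α^t = {x ∈ F_p^n : A^t x = α • 𝟙} (equivalently, the t-fold preimage of {α·𝟙} under x ↦ A x, since α·𝟙 is a fixed point of A). Then the following are equivalent: (i) the iteration x(t+1) = A x(t) achieves consensus; (ii) there exists α ∈ F_p and T < n such that S_α^T = S_α^{T+1} and the cardinality of S_α^T equals p^{n−1}; (iii) for every α ∈ F_p there exists T < n such that S_α^T = S_α^{T+1} and the cardinality of S_α^T equals p^{n−1}. -/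
/-!
The iteration is the endomorphism `f = toLin' A` of `V = 𝔽_p^n`, which fixes `v = 𝟙 ≠ 0`.
Hence `S_α^t = α • 𝟙 + ker f^t`, so both conditions on `S_α^T` depend only on `ker f^T`,
not on `α`. As `v ∈ range f^t`, `dim ker f^t = n - 1` means `range f^t = 𝔽_p v`, i.e.
consensus from time `t` on. Conversely, the kernels `ker f^t` grow strictly until they
stabilise and never reach `V` (they miss `v`), so they stabilise by `t = n - 1`; hence
consensus, once reached, is reached by time `n - 1`.
-/

open Matrix Module Pointwise

namespace Module.End

variable {K V : Type*} [Field K] [AddCommGroup V] [Module K V]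

def AchievesConsensus (f : End K V) (v : V) : Prop :=
  ∀ x, ∃ T : ℕ, ∃ a : K, ∀ t ≥ T, (f ^ t) x = a • v

section KernelChain

variable [FiniteDimensional K V] (f : End K V)

theorem le_finrank_ker_pow_of_forall_ker_pow_ne {m : ℕ}
    (h : ∀ k < m, LinearMap.ker (f ^ k) ≠ LinearMap.ker (f ^ (k + 1))) :
    m ≤ finrank K (LinearMap.ker (f ^ m)) := by
  induction m with
  | zero => exact Nat.zero_le _
  | succ m ih =>
    have hlt : LinearMap.ker (f ^ m) < LinearMap.ker (f ^ (m + 1)) :=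
      lt_of_le_of_ne (by rw [pow_succ']; exact LinearMap.ker_le_ker_comp _ _)
        (h m m.lt_succ_self)
    have := Submodule.finrank_lt_finrank_of_lt hlt
    have := ih fun k hk => h k (hk.trans m.lt_succ_self)
    omega

theorem ker_pow_eq_ker_pow_succ_of_finrank_le {m : ℕ}
    (hm : finrank K (LinearMap.ker (f ^ (m + 1))) ≤ m) :
    LinearMap.ker (f ^ m) = LinearMap.ker (f ^ (m + 1)) := by
  by_contra hne
  refine (le_finrank_ker_pow_of_forall_ker_pow_ne f fun k hk hk' => hne ?_).not_gt
    (Nat.lt_succ_of_le hm)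
  obtain ⟨j, rfl⟩ := Nat.exists_eq_add_of_le (Nat.le_of_lt_succ hk)
  exact (ker_pow_constant hk' j).symm.trans (ker_pow_constant hk' (j + 1))

end KernelChain

section FixedVector

variable (f : End K V) {v : V}

theorem pow_apply_of_apply_eq_self (hv : f v = v) (t : ℕ) : (f ^ t) v = v := by
  rw [pow_apply]
  exact Function.iterate_fixed hv t

theorem setOf_pow_apply_eq_smul (hv : f v = v) (a : K) (t : ℕ) :
    {x | (f ^ t) x = a • v} = a • v +ᵥ (LinearMap.ker (f ^ t) : Set V) := by
  ext x
  rw [Set.mem_ofPred_eq, Set.mem_vadd_set_iff_neg_vadd_mem, SetLike.mem_coe, LinearMap.mem_ker,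
    vadd_eq_add, map_add, map_neg, map_smul, pow_apply_of_apply_eq_self f hv, neg_add_eq_zero,
    eq_comm]

theorem setOf_pow_apply_eq_smul_eq_iff (hv : f v = v) (a : K) (s t : ℕ) :
    {x | (f ^ s) x = a • v} = {x | (f ^ t) x = a • v} ↔
      LinearMap.ker (f ^ s) = LinearMap.ker (f ^ t) := by
  rw [setOf_pow_apply_eq_smul f hv, setOf_pow_apply_eq_smul f hv, vadd_left_cancel_iff,
    SetLike.coe_set_eq]

theorem ncard_setOf_pow_apply_eq_smul (hv : f v = v) (a : K) (t : ℕ) :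
    {x | (f ^ t) x = a • v}.ncard = Nat.card (LinearMap.ker (f ^ t)) := by
  rw [setOf_pow_apply_eq_smul f hv, Set.ncard_vadd_set, ← Nat.card_coe_set_eq]
  rfl

theorem achievesConsensus_of_range_pow_le_span (hv : f v = v) {T : ℕ}
    (hT : LinearMap.range (f ^ T) ≤ K ∙ v) : AchievesConsensus f v := by
  intro x
  obtain ⟨a, ha⟩ := Submodule.mem_span_singleton.mp (hT (LinearMap.mem_range_self _ x))
  refine ⟨T, a, fun t ht => ?_⟩
  obtain ⟨j, rfl⟩ := Nat.exists_eq_add_of_le' ht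
  rw [pow_add, mul_apply, ← ha, map_smul, pow_apply_of_apply_eq_self f hv]

variable [FiniteDimensional K V]

theorem range_pow_le_span_iff (hv : f v = v) (hv0 : v ≠ 0) (t : ℕ) :
    LinearMap.range (f ^ t) ≤ K ∙ v ↔
      finrank K (LinearMap.ker (f ^ t)) + 1 = finrank K V := by
  have hspan : K ∙ v ≤ LinearMap.range (f ^ t) := by
    rw [Submodule.span_singleton_le_iff_mem]
    exact ⟨v, pow_apply_of_apply_eq_self f hv t⟩
  have hrank := LinearMap.finrank_range_add_finrank_ker (f ^ t)
  have hline := finrank_span_singleton (K := K) hv0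
  constructor
  · intro hle
    rw [le_antisymm hle hspan] at hrank
    omega
  · intro hker
    exact (Submodule.eq_of_le_of_finrank_le hspan (by omega)).ge

theorem ker_pow_pred_finrank_eq (hv : f v = v) (hv0 : v ≠ 0) :
    LinearMap.ker (f ^ (finrank K V - 1)) = LinearMap.ker (f ^ finrank K V) := by
  have hpos : 0 < finrank K V := finrank_pos_iff_exists_ne_zero.mpr ⟨v, hv0⟩
  have hne : LinearMap.ker (f ^ finrank K V) ≠ ⊤ := by
    intro htop
    have hvker : v ∈ LinearMap.ker (f ^ finrank K V) := htop ▸ Submodule.mem_top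
    rw [LinearMap.mem_ker, pow_apply_of_apply_eq_self f hv] at hvker
    exact hv0 hvker
  have key := ker_pow_eq_ker_pow_succ_of_finrank_le f (m := finrank K V - 1)
  rw [Nat.sub_add_cancel hpos] at key
  exact key (Nat.le_sub_one_of_lt (Submodule.finrank_lt hne))

theorem ker_pow_le_ker_pow_pred_finrank (hv : f v = v) (hv0 : v ≠ 0) (m : ℕ) :
    LinearMap.ker (f ^ m) ≤ LinearMap.ker (f ^ (finrank K V - 1)) := by
  rw [ker_pow_pred_finrank_eq f hv hv0]
  exact ker_pow_le_ker_pow_finrank f m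

theorem range_pow_pred_finrank_le_span (hv : f v = v) (hv0 : v ≠ 0)
    (hf : AchievesConsensus f v) :
    LinearMap.range (f ^ (finrank K V - 1)) ≤ K ∙ v := by
  rintro _ ⟨x, rfl⟩
  obtain ⟨T, a, hT⟩ := hf x
  have hker : x - a • v ∈ LinearMap.ker (f ^ T) := by
    simp [hT T le_rfl, pow_apply_of_apply_eq_self f hv]
  have := ker_pow_le_ker_pow_pred_finrank f hv hv0 T hker
  rw [LinearMap.mem_ker, map_sub, map_smul, pow_apply_of_apply_eq_self f hv, sub_eq_zero] at this
  exact Submodule.mem_span_singleton.mpr ⟨a, this.symm⟩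

theorem achievesConsensus_iff (hv : f v = v) (hv0 : v ≠ 0) :
    AchievesConsensus f v ↔ ∃ T < finrank K V,
      LinearMap.ker (f ^ T) = LinearMap.ker (f ^ (T + 1)) ∧
        finrank K (LinearMap.ker (f ^ T)) + 1 = finrank K V := by
  have hpos : 0 < finrank K V := finrank_pos_iff_exists_ne_zero.mpr ⟨v, hv0⟩
  constructor
  · intro hf
    refine ⟨finrank K V - 1, by omega, ?_, ?_⟩
    · rw [Nat.sub_add_cancel hpos]
      exact ker_pow_pred_finrank_eq f hv hv0
    · exact (range_pow_le_span_iff f hv hv0 _).mp (range_pow_pred_finrank_le_span f hv hv0 hf)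
  · rintro ⟨T, -, -, hT⟩
    exact achievesConsensus_of_range_pow_le_span f hv ((range_pow_le_span_iff f hv hv0 T).mpr hT)

theorem exists_setOf_pow_apply_eq_smul_iff [Finite K] (hv : f v = v) (hv0 : v ≠ 0) (a : K) :
    (∃ T < finrank K V, {x | (f ^ T) x = a • v} = {x | (f ^ (T + 1)) x = a • v} ∧
        {x | (f ^ T) x = a • v}.ncard = Nat.card K ^ (finrank K V - 1)) ↔
      AchievesConsensus f v := by
  have hpos : 0 < finrank K V := finrank_pos_iff_exists_ne_zero.mpr ⟨v, hv0⟩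
  have hcard (T : ℕ) : Nat.card (LinearMap.ker (f ^ T)) = Nat.card K ^ (finrank K V - 1) ↔
      finrank K (LinearMap.ker (f ^ T)) + 1 = finrank K V := by
    rw [natCard_eq_pow_finrank (K := K), Nat.pow_right_inj Finite.one_lt_card]
    omega
  simp only [achievesConsensus_iff f hv hv0, setOf_pow_apply_eq_smul_eq_iff f hv,
    ncard_setOf_pow_apply_eq_smul f hv, hcard]

end FixedVector

end Module.End

/-- Recursion-subspaces characterization of finite-field consensus.
`S_α^t = {x | A^t *ᵥ x = α • 𝟙}` is the `t`-fold preimage of `{α • 𝟙}`.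
The iteration achieves consensus iff for some (equivalently, for every)
`α ∈ ZMod p` the inverse recursion converges with limiting set of
cardinality `p ^ (n-1)`. -/
theorem finiteField_consensus_iff_recursion_sets
    (p n : ℕ) [Fact p.Prime] (hn : 1 ≤ n)
    (A : Matrix (Fin n) (Fin n) (ZMod p))
    (hA : A *ᵥ (1 : Fin n → ZMod p) = 1) :
    ((∀ x0 : Fin n → ZMod p, ∃ T : ℕ, ∃ α : ZMod p,
        ∀ t ≥ T, (A ^ t) *ᵥ x0 = α • (1 : Fin n → ZMod p)) ↔
      (∃ α : ZMod p, ∃ T : ℕ, T < n ∧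
        {x : Fin n → ZMod p | (A ^ T) *ᵥ x = α • (1 : Fin n → ZMod p)} =
          {x : Fin n → ZMod p | (A ^ (T + 1)) *ᵥ x = α • (1 : Fin n → ZMod p)} ∧
        ({x : Fin n → ZMod p | (A ^ T) *ᵥ x = α • (1 : Fin n → ZMod p)}).ncard
          = p ^ (n - 1)))
    ∧
    ((∃ α : ZMod p, ∃ T : ℕ, T < n ∧
        {x : Fin n → ZMod p | (A ^ T) *ᵥ x = α • (1 : Fin n → ZMod p)} =
          {x : Fin n → ZMod p | (A ^ (T + 1)) *ᵥ x = α • (1 : Fin n → ZMod p)} ∧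
        ({x : Fin n → ZMod p | (A ^ T) *ᵥ x = α • (1 : Fin n → ZMod p)}).ncard
          = p ^ (n - 1)) ↔
      (∀ α : ZMod p, ∃ T : ℕ, T < n ∧
        {x : Fin n → ZMod p | (A ^ T) *ᵥ x = α • (1 : Fin n → ZMod p)} =
          {x : Fin n → ZMod p | (A ^ (T + 1)) *ᵥ x = α • (1 : Fin n → ZMod p)} ∧
        ({x : Fin n → ZMod p | (A ^ T) *ᵥ x = α • (1 : Fin n → ZMod p)}).ncard
          = p ^ (n - 1))) := by
  have : Nonempty (Fin n) := ⟨⟨0, hn⟩⟩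
  have hpow (t : ℕ) (x : Fin n → ZMod p) : (A ^ t) *ᵥ x = (toLin' A ^ t) x := by
    rw [← toLin'_pow, toLin'_apply]
  have key (α : ZMod p) := End.exists_setOf_pow_apply_eq_smul_iff (toLin' A)
    (by rwa [toLin'_apply]) one_ne_zero α
  simp only [finrank_fin_fun, Nat.card_zmod] at key
  simp only [hpow]
  exact ⟨⟨fun hc => ⟨0, (key 0).mpr hc⟩, fun ⟨α, hα⟩ => (key α).mp hα⟩,
    ⟨fun ⟨α, hα⟩ β => (key β).mpr ((key α).mp hα), fun h => ⟨0, h 0⟩⟩⟩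
end

section
/- Let p be a prime, n ≥ 1, and A a row-stochastic n×n matrix over F_p = ZMod p. Then the iteration x(t+1) = A x(t) achieves consensus if and only if the characteristic polynomial of A over F_p equals X^{n−1}·(X − 1). -/
/-!
Conjugate `A` by the invertible matrix `1 + (𝟙 - e₀) e₀ᵀ`, which sends `e₀` to `𝟙`. Since `A 𝟙 = 𝟙`,
the conjugate `M` fixes `e₀`, so it is block upper triangular with blocks `1` and
`B = M.submatrix succ succ`. The coordinates of `M ^ t y` other than the first are `B ^ t` applied
to those of `y`, so consensus along `e₀` means exactly that `B` is nilpotent; and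
`charpoly A = charpoly M = (X - 1) * charpoly B`, while over a reduced ring `B` is nilpotent iff
`charpoly B = X ^ (n - 1)`.
-/

open Matrix Polynomial

theorem eq_smul_single_zero_of_tail_eq_zero {R : Type*} [CommRing R] {m : ℕ}
    {y : Fin (m + 1) → R} (h : Fin.tail y = 0) : y = y 0 • Pi.single 0 1 := by
  ext i
  cases i using Fin.cases with
  | zero => simp
  | succ i => simpa [Fin.tail] using congrFun h i

namespace Matrix

section Transvection

variable {ι R : Type*} [Fintype ι] [DecidableEq ι] [CommRing R]

def unitOneAddVecMulVec (v w : ι → R) (h : w ⬝ᵥ v = 0) : (Matrix ι ι R)ˣ where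
  val := 1 + vecMulVec v w
  inv := 1 - vecMulVec v w
  val_inv := by
    rw [add_mul, mul_sub, mul_sub, vecMulVec_mul_vecMulVec, h, zero_smul, vecMulVec_zero]
    simp
  inv_val := by
    rw [sub_mul, mul_add, mul_add, vecMulVec_mul_vecMulVec, h, zero_smul, vecMulVec_zero]
    simp

theorem unitOneAddVecMulVec_mulVec (v w x : ι → R) (h : w ⬝ᵥ v = 0) :
    (unitOneAddVecMulVec v w h).val *ᵥ x = x + (w ⬝ᵥ x) • v := by
  simp [unitOneAddVecMulVec, add_mulVec, vecMulVec_mulVec]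

end Transvection

section Consensus

variable {ι R : Type*} [Fintype ι] [DecidableEq ι] [CommRing R]

def ConsensusAlong (A : Matrix ι ι R) (v : ι → R) : Prop :=
  ∀ x : ι → R, ∃ T : ℕ, ∃ α : R, ∀ t ≥ T, (A ^ t) *ᵥ x = α • v

theorem consensusAlong_units_conj (u : (Matrix ι ι R)ˣ) (A : Matrix ι ι R) (v : ι → R) :
    ConsensusAlong (u⁻¹.val * A * u.val) (u⁻¹.val *ᵥ v) ↔ ConsensusAlong A v := by
  have key (t : ℕ) (y : ι → R) (α : R) :
      ((u⁻¹.val * A * u.val) ^ t) *ᵥ y = α • (u⁻¹.val *ᵥ v) ↔ (A ^ t) *ᵥ (u.val *ᵥ y) = α • v := by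
    rw [Units.conj_pow', ← mulVec_mulVec, ← mulVec_mulVec, ← mulVec_smul]
    exact (mulVec_injective_of_isUnit u⁻¹.isUnit).eq_iff
  have hu (x : ι → R) : u.val *ᵥ (u⁻¹.val *ᵥ x) = x := by
    rw [mulVec_mulVec, u.mul_inv, one_mulVec]
  simp only [ConsensusAlong, key]
  exact ⟨fun h x => hu x ▸ h _, fun h y => h _⟩

theorem pow_mulVec_eq_self {N : Matrix ι ι R} {v : ι → R} (h : N *ᵥ v = v) (t : ℕ) :
    (N ^ t) *ᵥ v = v := by
  induction t with
  | zero => simp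
  | succ t ih => rw [pow_succ, ← mulVec_mulVec, h, ih]

end Consensus

section FixedFirstBasisVector

variable {R : Type*} [CommRing R] {m : ℕ} (M : Matrix (Fin (m + 1)) (Fin (m + 1)) R)

theorem tail_mulVec (h : ∀ i : Fin m, M i.succ 0 = 0) (y : Fin (m + 1) → R) :
    Fin.tail (M *ᵥ y) = M.submatrix Fin.succ Fin.succ *ᵥ Fin.tail y := by
  ext i
  simp [Fin.tail, mulVec, dotProduct, Fin.sum_univ_succ, h]

theorem tail_pow_mulVec (h : ∀ i : Fin m, M i.succ 0 = 0) (t : ℕ) (y : Fin (m + 1) → R) :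
    Fin.tail ((M ^ t) *ᵥ y) = (M.submatrix Fin.succ Fin.succ) ^ t *ᵥ Fin.tail y := by
  induction t with
  | zero => simp
  | succ t ih => rw [pow_succ', pow_succ', ← mulVec_mulVec, ← mulVec_mulVec, tail_mulVec M h, ih]

theorem consensusAlong_single_zero_iff_isNilpotent_submatrix
    (hM : M *ᵥ Pi.single 0 1 = Pi.single 0 1) :
    ConsensusAlong M (Pi.single 0 1) ↔ IsNilpotent (M.submatrix Fin.succ Fin.succ) := by
  have h (i : Fin m) : M i.succ 0 = 0 := by
    simpa [mulVec_single_one] using congrFun hM i.succ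
  constructor
  · intro hcons
    refine isNilpotent_iff.mpr fun z => ?_
    obtain ⟨T, α, hT⟩ := hcons (Fin.cons 0 z)
    refine ⟨T, ?_⟩
    have htail := tail_pow_mulVec M h T (Fin.cons 0 z)
    rw [hT T le_rfl, Fin.tail_cons] at htail
    rw [← htail]
    ext i
    simp [Fin.tail]
  · rintro ⟨T, hT⟩ y
    obtain ⟨α, hy⟩ : ∃ α : R, (M ^ T) *ᵥ y = α • (Pi.single 0 1 : Fin (m + 1) → R) :=
      ⟨_, eq_smul_single_zero_of_tail_eq_zero (by rw [tail_pow_mulVec M h, hT, zero_mulVec])⟩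
    refine ⟨T, α, fun t ht => ?_⟩
    obtain ⟨k, rfl⟩ := Nat.exists_eq_add_of_le' ht
    rw [pow_add, ← mulVec_mulVec, hy, mulVec_smul, pow_mulVec_eq_self hM]

theorem charpoly_eq_X_sub_one_mul_charpoly_submatrix
    (hM : M *ᵥ Pi.single 0 1 = Pi.single 0 1) :
    M.charpoly = (X - 1) * (M.submatrix Fin.succ Fin.succ).charpoly := by
  have hsub : (charmatrix M).submatrix Fin.succ Fin.succ
      = charmatrix (M.submatrix Fin.succ Fin.succ) := by
    ext i j : 1
    by_cases h : i = j <;> simp [h]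
  have hcol (i : Fin (m + 1)) : charmatrix M i 0 =
      (Pi.single 0 (X - 1) : Fin (m + 1) → R[X]) i := by
    cases i using Fin.cases with
    | zero => simpa [mulVec_single_one] using congrArg (fun w => C (w 0)) hM
    | succ i =>
      rw [charmatrix_apply_ne _ _ _ (Fin.succ_ne_zero i)]
      simpa [mulVec_single_one] using congrFun hM i.succ
  rw [charpoly, det_succ_column_zero, Fin.sum_univ_succ, hcol, Pi.single_eq_same]
  simp only [hcol, Pi.single_eq_of_ne (Fin.succ_ne_zero _), mul_zero, zero_mul,
    Finset.sum_const_zero, add_zero, Fin.succAbove_zero, hsub, charpoly, Fin.val_zero, pow_zero,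
    one_mul]

end FixedFirstBasisVector

theorem isNilpotent_iff_charpoly_eq_X_pow {ι R : Type*} [Fintype ι] [DecidableEq ι] [CommRing R]
    [IsReduced R] (B : Matrix ι ι R) : IsNilpotent B ↔ B.charpoly = X ^ Fintype.card ι :=
  ⟨fun h => sub_eq_zero.mp <| Polynomial.ext fun i =>
      (Polynomial.isNilpotent_iff.mp (isNilpotent_charpoly_sub_pow_of_isNilpotent h) i).eq_zero,
    fun h => ⟨Fintype.card ι, by rw [← aeval_X_pow (R := R), ← h, aeval_self_charpoly]⟩⟩

end Matrix

/-- A row-stochastic matrix over `ZMod p` achieves consensus if and only if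
its characteristic polynomial is `X^(n-1) * (X - 1)`. -/
theorem finiteField_consensus_iff_charpoly
    (p n : ℕ) [Fact p.Prime] (hn : 1 ≤ n)
    (A : Matrix (Fin n) (Fin n) (ZMod p))
    (hA : A *ᵥ (1 : Fin n → ZMod p) = 1) :
    (∀ x0 : Fin n → ZMod p, ∃ T : ℕ, ∃ α : ZMod p,
      ∀ t ≥ T, (A ^ t) *ᵥ x0 = α • (1 : Fin n → ZMod p)) ↔
    A.charpoly = X ^ (n - 1) * (X - 1) := by
  obtain ⟨m, rfl⟩ : ∃ m, n = m + 1 := ⟨n - 1, by omega⟩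
  set e₀ : Fin (m + 1) → ZMod p := Pi.single 0 1
  let u := unitOneAddVecMulVec (1 - e₀) e₀ (by simp [e₀, dotProduct_sub])
  have hu : u.val *ᵥ e₀ = 1 := by rw [unitOneAddVecMulVec_mulVec]; simp [e₀]
  have hu' : u⁻¹.val *ᵥ 1 = e₀ := by rw [← hu, mulVec_mulVec, u.inv_mul, one_mulVec]
  set M := u⁻¹.val * A * u.val
  have hM : M *ᵥ e₀ = e₀ := by simp only [M, ← mulVec_mulVec, hu, hA, hu']
  have hcons : ConsensusAlong A 1 ↔ IsNilpotent (M.submatrix Fin.succ Fin.succ) := by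
    rw [← consensusAlong_units_conj u, hu',
      consensusAlong_single_zero_iff_isNilpotent_submatrix M hM]
  have hchar : A.charpoly = (X - 1) * (M.submatrix Fin.succ Fin.succ).charpoly := by
    have hMA : M.charpoly = A.charpoly := by simp only [M, coe_units_inv, charpoly_units_conj']
    rw [← charpoly_eq_X_sub_one_mul_charpoly_submatrix M hM, hMA]
  have hX : (X - 1 : (ZMod p)[X]) ≠ 0 := by simpa using X_sub_C_ne_zero (1 : ZMod p)
  rw [Nat.add_sub_cancel, mul_comm _ (X - 1), hchar, mul_right_inj' hX]
  exact hcons.trans (by rw [isNilpotent_iff_charpoly_eq_X_pow, Fintype.card_fin])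
end

section
/- Let p be a prime, n ≥ 1, and A a row-stochastic n×n matrix over F_p = ZMod p whose iteration x(t+1) = A x(t) achieves consensus. Then there exists a unique row vector π ∈ F_p^n satisfying π A = π (i.e., Aᵀ π = π) and π · 𝟙 = 1, and moreover A^{n−1} equals the outer product 𝟙 πᵀ (the matrix whose (i,j) entry is π_j). Consequently, for every initial state x(0), consensus is reached within n−1 iterations at the value π · x(0). -/
open Matrix

/-- Finite-field consensus time and value: for a row-stochastic consensus
matrix `A` over `ZMod p` there is a unique row vector `π` with `π ᵥ* A = π`
and `π ⬝ᵥ 𝟙 = 1`; moreover `A^(n-1) = 𝟙 πᵀ` (the outer product), so consensus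
is reached within `n - 1` iterations at the value `π ⬝ᵥ x(0)`. -/
theorem finiteField_consensus_time_and_value
    (p n : ℕ) [Fact p.Prime] (hn : 1 ≤ n)
    (A : Matrix (Fin n) (Fin n) (ZMod p))
    (hA : A *ᵥ (1 : Fin n → ZMod p) = 1)
    (h : ∀ x0 : Fin n → ZMod p, ∃ T : ℕ, ∃ α : ZMod p,
      ∀ t ≥ T, (A ^ t) *ᵥ x0 = α • (1 : Fin n → ZMod p)) :
    (∃! π : Fin n → ZMod p,
      π ᵥ* A = π ∧ π ⬝ᵥ (1 : Fin n → ZMod p) = 1) ∧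
    (∀ π : Fin n → ZMod p,
      π ᵥ* A = π → π ⬝ᵥ (1 : Fin n → ZMod p) = 1 →
        A ^ (n - 1) = vecMulVec (1 : Fin n → ZMod p) π ∧
        ∀ x0 : Fin n → ZMod p, ∀ t ≥ n - 1,
          (A ^ t) *ᵥ x0 = (π ⬝ᵥ x0) • (1 : Fin n → ZMod p)) := by
  classical
  have i0 : Fin n := ⟨0, hn⟩
  have hone : (1 : Fin n → ZMod p) ≠ 0 := by
    intro h0
    have h1 := congrFun h0 i0
    simp at h1
  have hpow1 : ∀ k : ℕ, (A ^ k) *ᵥ (1 : Fin n → ZMod p) = 1 := by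
    intro k
    induction k with
    | zero => simp
    | succ k ih => rw [pow_succ, ← mulVec_mulVec, hA, ih]
  set W : Submodule (ZMod p) (Fin n → ZMod p) :=
    Submodule.span (ZMod p) {(1 : Fin n → ZMod p)} with hW
  set R : ℕ → Submodule (ZMod p) (Fin n → ZMod p) :=
    fun k => LinearMap.range (A ^ k).mulVecLin with hRdef
  have hRanti : ∀ a b : ℕ, a ≤ b → R b ≤ R a := by
    intro a b hab
    rintro _ ⟨x, rfl⟩
    have he : (A ^ b) *ᵥ x = (A ^ a) *ᵥ ((A ^ (b - a)) *ᵥ x) := by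
      rw [mulVec_mulVec, ← pow_add, Nat.add_sub_cancel' hab]
    rw [mulVecLin_apply, he]
    exact ⟨_, rfl⟩
  have hWle : ∀ k, W ≤ R k := by
    intro k
    rw [hW, Submodule.span_le, Set.singleton_subset_iff]
    exact ⟨1, by simp [hpow1 k]⟩
  have hstep : ∀ k, R (k + 1) = Submodule.map A.mulVecLin (R k) := by
    intro k
    ext y
    constructor
    · rintro ⟨x, rfl⟩
      exact ⟨(A ^ k) *ᵥ x, ⟨x, rfl⟩, by
        simp [mulVecLin_apply, mulVec_mulVec, ← pow_succ']⟩
    · rintro ⟨_, ⟨x, rfl⟩, rfl⟩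
      exact ⟨x, by simp [mulVecLin_apply, mulVec_mulVec, ← pow_succ']⟩
  have hconst : ∀ k, R k = R (k + 1) → ∀ m, k ≤ m → R m = R k := by
    intro k hk m hm
    obtain ⟨d, rfl⟩ := Nat.exists_eq_add_of_le hm
    clear hm
    induction d with
    | zero => rfl
    | succ d ih =>
      show R ((k + d) + 1) = R k
      rw [hstep, ih, ← hstep, ← hk]
  have hexists : ∃ k < n, R k = R (k + 1) := by
    by_contra hcon
    push_neg at hcon
    have hlt : ∀ k < n, Module.finrank (ZMod p) (R (k + 1)) <
        Module.finrank (ZMod p) (R k) := by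
      intro k hk
      exact Submodule.finrank_lt_finrank_of_lt
        (lt_of_le_of_ne (hRanti k (k + 1) (Nat.le_succ k))
          (fun e => hcon k hk e.symm))
    have hbound : ∀ k ≤ n, Module.finrank (ZMod p) (R k) + k ≤ n := by
      intro k hk
      induction k with
      | zero =>
        simpa using (Submodule.finrank_le (R 0)).trans_eq
          (Module.finrank_fin_fun (ZMod p))
      | succ k ih =>
        have h1 := ih (Nat.le_of_succ_le hk)
        have h2 := hlt k (Nat.lt_of_succ_le hk)
        omega
    have hz : Module.finrank (ZMod p) (R n) = 0 := by
      have := hbound n le_rfl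
      omega
    have hbot : R n = ⊥ := by
      exact Submodule.finrank_eq_zero.mp hz
    have : (1 : Fin n → ZMod p) ∈ R n :=
      hWle n (Submodule.mem_span_singleton_self _)
    rw [hbot, Submodule.mem_bot] at this
    exact hone this
  choose T α hT using h
  set N : ℕ := Finset.univ.sup T with hNdef
  have hN : R N ≤ W := by
    rintro _ ⟨x, rfl⟩
    rw [mulVecLin_apply, hT x N (Finset.le_sup (Finset.mem_univ x))]
    exact Submodule.smul_mem _ _ (Submodule.mem_span_singleton_self _)
  have hRW : R (n - 1) ≤ W := by
    obtain ⟨k, hk, hkeq⟩ := hexists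
    have hk1 : k ≤ n - 1 := Nat.le_sub_one_of_lt hk
    calc R (n - 1) = R k := hconst k hkeq (n - 1) hk1
      _ = R (max N (n - 1)) :=
        (hconst k hkeq (max N (n - 1)) (hk1.trans (le_max_right _ _))).symm
      _ ≤ R N := hRanti N _ (le_max_left _ _)
      _ ≤ W := hN
  have hc : ∀ j : Fin n, ∃ c : ZMod p,
      c • (1 : Fin n → ZMod p) = (A ^ (n - 1)) *ᵥ Pi.single j 1 := by
    intro j
    exact Submodule.mem_span_singleton.mp (hRW ⟨Pi.single j 1, rfl⟩)
  choose π0 hπ0 using hc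
  have hmat : A ^ (n - 1) = vecMulVec (1 : Fin n → ZMod p) π0 := by
    ext i j
    have h1 := congrFun (hπ0 j) i
    rw [mulVec_single] at h1
    simpa [vecMulVec_apply] using h1.symm
  have hrow : ∀ i, ∑ k, A i k = 1 := by
    intro i
    have := congrFun hA i
    simpa [mulVec, dotProduct] using this
  have hπ1 : π0 ⬝ᵥ (1 : Fin n → ZMod p) = 1 := by
    have h1 := hpow1 (n - 1)
    rw [hmat] at h1
    have h2 := congrFun h1 i0
    simpa [mulVec, dotProduct, vecMulVec_apply] using h2
  have hπA : π0 ᵥ* A = π0 := by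
    have hcomm : A * A ^ (n - 1) = A ^ (n - 1) * A := ((Commute.pow_self A (n - 1)).symm).eq
    rw [hmat] at hcomm
    funext j
    have h2 := congrFun (congrFun hcomm i0) j
    simp only [mul_apply, vecMulVec_apply, Pi.one_apply, one_mul] at h2
    rw [← Finset.sum_mul, hrow i0] at h2
    rw [one_mul] at h2
    rw [h2]
    simp [vecMul, dotProduct]
  have huniq : ∀ σ : Fin n → ZMod p, σ ᵥ* A = σ →
      σ ⬝ᵥ (1 : Fin n → ZMod p) = 1 → σ = π0 := by
    intro σ h1 h2
    have hk : ∀ k, σ ᵥ* (A ^ k) = σ := by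
      intro k
      induction k with
      | zero => simp
      | succ k ih => rw [pow_succ, ← vecMul_vecMul, ih, h1]
    have h3 := hk (n - 1)
    rw [hmat] at h3
    have hσsum : ∑ i, σ i = 1 := by simpa [dotProduct] using h2
    funext j
    have h4 := congrFun h3 j
    simp only [vecMul, dotProduct, vecMulVec_apply, Pi.one_apply, one_mul] at h4
    rw [← Finset.sum_mul, hσsum, one_mul] at h4
    exact h4.symm
  refine ⟨⟨π0, ⟨hπA, hπ1⟩, fun σ hσ => huniq σ hσ.1 hσ.2⟩, ?_⟩
  intro π hπA' hπ1'
  obtain rfl : π = π0 := huniq π hπA' hπ1'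
  refine ⟨hmat, ?_⟩
  intro x0 t ht
  have h1 : (A ^ (n - 1)) *ᵥ x0 = (π ⬝ᵥ x0) • (1 : Fin n → ZMod p) := by
    rw [hmat]
    funext i
    simp [mulVec, dotProduct, vecMulVec_apply, Finset.sum_mul]
  have h2 : A ^ t = A ^ (t - (n - 1)) * A ^ (n - 1) := by
    rw [← pow_add, Nat.sub_add_cancel ht]
  rw [h2, ← mulVec_mulVec, h1, mulVec_smul, hpow1]
end

section
/- Let p be a prime, n ≥ 1, and A a row-stochastic n×n matrix over F_p = ZMod p achieving consensus, and let π ∈ F_p^n be the unique vector with π A = π and π · 𝟙 = 1. Then for every index i, if π_i ≠ 0 then vertex i is a root of the directed interaction graph associated with A: for every vertex j there exists a finite sequence of indices i = v_0, v_1, …, v_k = j such that A_{v_{l+1}, v_l} ≠ 0 for every l (that is, the initial value of agent i influences every agent). -/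
open Matrix

/-- For a row-stochastic consensus matrix `A` over `ZMod p` with invariant
row vector `π` (`π ᵥ* A = π`, `π ⬝ᵥ 𝟙 = 1`), every index `i` with `π i ≠ 0`
is a root of the interaction graph of `A`: for every vertex `j` there is a
walk `i = v 0, v 1, …, v k = j` with `A (v (l+1)) (v l) ≠ 0` for all `l < k`. -/
theorem finiteField_consensus_pi_support_is_root
    (p n : ℕ) [Fact p.Prime] (hn : 1 ≤ n)
    (A : Matrix (Fin n) (Fin n) (ZMod p))
    (hA : A *ᵥ (1 : Fin n → ZMod p) = 1)
    (h : ∀ x0 : Fin n → ZMod p, ∃ T : ℕ, ∃ α : ZMod p,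
      ∀ t ≥ T, (A ^ t) *ᵥ x0 = α • (1 : Fin n → ZMod p))
    (π : Fin n → ZMod p)
    (hπ : π ᵥ* A = π) (hπ1 : π ⬝ᵥ (1 : Fin n → ZMod p) = 1) :
    ∀ i : Fin n, π i ≠ 0 → ∀ j : Fin n,
      ∃ (k : ℕ) (v : ℕ → Fin n), v 0 = i ∧ v k = j ∧
        ∀ l < k, A (v (l + 1)) (v l) ≠ 0 := by
  intro i hi j
  -- reachability predicate
  set R : Fin n → Prop := fun m =>
    ∃ (k : ℕ) (v : ℕ → Fin n), v 0 = i ∧ v k = m ∧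
      ∀ l < k, A (v (l + 1)) (v l) ≠ 0 with hR
  have hRi : R i := ⟨0, fun _ => i, rfl, rfl, by omega⟩
  have hRstep : ∀ m m', R m → A m' m ≠ 0 → R m' := by
    rintro m m' ⟨k, v, hv0, hvk, hvA⟩ hAm
    refine ⟨k + 1, fun l => if l ≤ k then v l else m', ?_, ?_, ?_⟩
    · simp [hv0]
    · simp
    · intro l hl
      rcases Nat.lt_or_ge l k with hlk | hlk
      · simpa [Nat.le_of_lt hlk, Nat.succ_le_of_lt hlk] using hvA l hlk
      · have : l = k := by omega
        subst this
        simpa [hvk] using hAm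
  -- matrix powers stay in reachable set
  have key : ∀ t : ℕ, ∀ m : Fin n, (A ^ t) m i ≠ 0 → R m := by
    intro t
    induction t with
    | zero =>
      intro m hm
      have : m = i := by
        by_contra hne
        simp [Matrix.one_apply, hne] at hm
      exact this ▸ hRi
    | succ t ih =>
      intro m hm
      rw [pow_succ'] at hm
      rw [Matrix.mul_apply] at hm
      obtain ⟨l, _, hl⟩ := Finset.exists_ne_zero_of_sum_ne_zero hm
      exact hRstep l m (ih l (fun hz => hl (by rw [hz, mul_zero]))) fun hz => hl (by rw [hz, zero_mul])
  by_contra hj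
  have hjR : ¬ R j := hj
  obtain ⟨T, α, hT⟩ := h (Pi.single i 1)
  have hzero : ∀ t ≥ T, (A ^ t) j i = 0 := by
    intro t ht
    by_contra hne
    exact hjR (key t j hne)
  have happ : ((A ^ T) *ᵥ Pi.single i 1) j = (A ^ T) j i := by
    simp [Matrix.mulVec, dotProduct, Pi.single_apply, mul_ite]
  have hα : α = 0 := by
    have h1 := congrFun (hT T le_rfl) j
    rw [happ, hzero T le_rfl] at h1
    simpa using h1.symm
  have hTz : (A ^ T) *ᵥ Pi.single i 1 = 0 := by
    rw [hT T le_rfl, hα, zero_smul]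
  have hπpow : ∀ t : ℕ, π ᵥ* (A ^ t) = π := by
    intro t
    induction t with
    | zero => simp
    | succ t ih => rw [pow_succ, ← Matrix.vecMul_vecMul, ih, hπ]
  have : π ⬝ᵥ ((A ^ T) *ᵥ Pi.single i 1) = π i := by
    rw [Matrix.dotProduct_mulVec, hπpow]
    simp
  rw [hTz] at this
  simp at this
  exact hi this.symm
end

section
/- Let p be a prime, and let A be an n×n matrix and B an m×m matrix over F_p = ZMod p. If the iterations associated with both A and B achieve consensus, then the iteration associated with the Kronecker product A ⊗ B (an nm×nm matrix over F_p) achieves consensus. -/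
open Matrix Kronecker

lemma kron_pow_aux {n m p : ℕ} (A : Matrix (Fin n) (Fin n) (ZMod p))
    (B : Matrix (Fin m) (Fin m) (ZMod p)) (t : ℕ) :
    (A ⊗ₖ B) ^ t = (A ^ t) ⊗ₖ (B ^ t) := by
  induction t with
  | zero => simp [Matrix.one_kronecker_one]
  | succ t ih => rw [pow_succ, pow_succ, pow_succ, ih, ← Matrix.mul_kronecker_mul]

/-- If the iterations associated with `A` and `B` over `ZMod p` both achieve
consensus, then the iteration associated with the Kronecker product `A ⊗ₖ B`
achieves consensus. -/
theorem finiteField_consensus_kronecker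
    (p n m : ℕ) [Fact p.Prime]
    (A : Matrix (Fin n) (Fin n) (ZMod p))
    (B : Matrix (Fin m) (Fin m) (ZMod p))
    (hA : ∀ x0 : Fin n → ZMod p, ∃ T : ℕ, ∃ α : ZMod p,
      ∀ t ≥ T, (A ^ t) *ᵥ x0 = α • (1 : Fin n → ZMod p))
    (hB : ∀ x0 : Fin m → ZMod p, ∃ T : ℕ, ∃ α : ZMod p,
      ∀ t ≥ T, (B ^ t) *ᵥ x0 = α • (1 : Fin m → ZMod p)) :
    ∀ x0 : Fin n × Fin m → ZMod p, ∃ T : ℕ, ∃ α : ZMod p,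
      ∀ t ≥ T, ((A ⊗ₖ B) ^ t) *ᵥ x0 = α • (1 : Fin n × Fin m → ZMod p) := by
  intro x0
  choose Ta α hα using fun j => hA (Pi.single j 1)
  choose Tb β hβ using fun l => hB (Pi.single l 1)
  have hAe : ∀ j, ∀ t ≥ Ta j, ∀ i, (A ^ t) i j = α j := by
    intro j t ht i
    have := congrFun (hα j t ht) i
    simpa [Matrix.mulVec_single] using this
  have hBe : ∀ l, ∀ t ≥ Tb l, ∀ k, (B ^ t) k l = β l := by
    intro l t ht k
    have := congrFun (hβ l t ht) k
    simpa [Matrix.mulVec_single] using this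
  refine ⟨(Finset.univ.sup Ta) ⊔ (Finset.univ.sup Tb),
    ∑ jl : Fin n × Fin m, α jl.1 * β jl.2 * x0 jl, ?_⟩
  intro t ht
  have htA : ∀ j, Ta j ≤ t := fun j =>
    le_trans (Finset.le_sup (Finset.mem_univ j)) (le_trans le_sup_left ht)
  have htB : ∀ l, Tb l ≤ t := fun l =>
    le_trans (Finset.le_sup (Finset.mem_univ l)) (le_trans le_sup_right ht)
  funext ik
  rw [kron_pow_aux]
  simp only [Matrix.mulVec, dotProduct, Matrix.kroneckerMap_apply,
    Pi.smul_apply, Pi.one_apply, smul_eq_mul, mul_one]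
  refine Finset.sum_congr rfl fun jl _ => ?_
  rw [hAe jl.1 t (htA jl.1) ik.1, hBe jl.2 t (htB jl.2) ik.2]
end

section
/- Let p be a prime and n ≥ 1 with p dividing n. Then no n×n matrix A over F_p = ZMod p achieves average consensus in the following sense: there is no A such that for every initial state x(0) ∈ F_p^n there exist T ∈ ℕ and α ∈ F_p with A^t x(0) = α • 𝟙 for all t ≥ T and (n : F_p) · α = ∑_i x(0)_i. -/
open Matrix

/-- If `p` divides `n`, then no `n × n` matrix over `ZMod p` achieves average
consensus: there is no `A` such that every trajectory reaches in finite time a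
consensus value `α` satisfying `n * α = ∑ᵢ x0 i` in `ZMod p`. -/
theorem finiteField_no_average_consensus_of_dvd
    (p n : ℕ) [Fact p.Prime] (hn : 1 ≤ n) (hpn : p ∣ n) :
    ¬ ∃ A : Matrix (Fin n) (Fin n) (ZMod p),
      ∀ x0 : Fin n → ZMod p, ∃ T : ℕ, ∃ α : ZMod p,
        (∀ t ≥ T, (A ^ t) *ᵥ x0 = α • (1 : Fin n → ZMod p)) ∧
        (n : ZMod p) * α = ∑ i, x0 i := by
  rintro ⟨A, hA⟩
  have h0 : (n : ZMod p) = 0 := (ZMod.natCast_eq_zero_iff n p).mpr hpn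
  set i0 : Fin n := ⟨0, hn⟩
  obtain ⟨T, α, -, hsum⟩ := hA (fun i => if i = i0 then 1 else 0)
  rw [h0, zero_mul, Finset.sum_ite_eq' Finset.univ i0 (fun _ => (1 : ZMod p))] at hsum
  simp at hsum
end

section
/- Let p be a prime, n ≥ 1, and let π : Fin n → Fin n be a 'parent' map and r ∈ Fin n a vertex such that π(r) = r and for every vertex i, iterating π from i eventually reaches r (the functional graph of π is a tree rooted at r with a self-loop at r). Define A ∈ Matrix (Fin n) (Fin n) (ZMod p) by A_{ij} = 1 if j = π(i) and A_{ij} = 0 otherwise. Then A is row-stochastic, its characteristic polynomial is X^{n−1}·(X−1), and the iteration x(t+1) = A x(t) achieves consensus. -/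
/-!
Ordering the vertices by their depth in the tree, ties broken by any linear order, makes `Aᵀ`
triangular. Its diagonal is `1` at the root and `0` elsewhere, because the root is the only fixed
point of `π`, and this gives the characteristic polynomial. Moreover `A ^ t *ᵥ x = x ∘ π^[t]`,
and `π^[t]` is constantly `r` once `t` exceeds every depth, so then `A ^ t *ᵥ x = x r • 1`.
-/

open Function Matrix Polynomial

namespace Matrix

variable {n R α : Type*} [Fintype n] [DecidableEq n] [CommRing R] [LinearOrder α]
  {M : Matrix n n R} {b : n → α}

theorem BlockTriangular.det_of_injective (hM : M.BlockTriangular b) (hb : Injective b) :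
    M.det = ∏ i, M i i := by
  classical
  rw [hM.det, Finset.prod_image hb.injOn]
  refine Finset.prod_congr rfl fun i _ => ?_
  let : Unique { j // b j = b i } := ⟨⟨⟨i, rfl⟩⟩, fun j => Subtype.ext (hb j.2)⟩
  exact det_unique _

theorem BlockTriangular.charpoly_of_injective (hM : M.BlockTriangular b) (hb : Injective b) :
    M.charpoly = ∏ i, (X - C (M i i)) := by
  rw [Matrix.charpoly, hM.charmatrix.det_of_injective hb]
  simp only [charmatrix_apply_eq]

end Matrix

def funMatrix {n : Type*} [DecidableEq n] (R : Type*) [Zero R] [One R] (f : n → n) :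
    Matrix n n R :=
  of fun i j => if j = f i then 1 else 0

section funMatrix

variable {n R : Type*} [Fintype n] [DecidableEq n] [Semiring R]

theorem funMatrix_mulVec (f : n → n) (x : n → R) : funMatrix R f *ᵥ x = x ∘ f := by
  ext i
  simp [funMatrix, mulVec, dotProduct]

theorem funMatrix_pow_mulVec (f : n → n) (t : ℕ) (x : n → R) :
    funMatrix R f ^ t *ᵥ x = x ∘ f^[t] := by
  induction t with
  | zero => simp
  | succ t ih => rw [pow_succ', ← mulVec_mulVec, ih, funMatrix_mulVec, iterate_succ, comp_assoc]

theorem funMatrix_mulVec_one (f : n → n) : funMatrix R f *ᵥ 1 = 1 :=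
  funMatrix_mulVec f 1

end funMatrix

section RootDepth

variable {n : Type*} [DecidableEq n] {π : n → n} {r : n}

def rootDepth (hreach : ∀ i, ∃ k, π^[k] i = r) (i : n) : ℕ :=
  Nat.find (hreach i)

theorem iterate_rootDepth (hreach : ∀ i, ∃ k, π^[k] i = r) (i : n) :
    π^[rootDepth hreach i] i = r :=
  Nat.find_spec (hreach i)

theorem rootDepth_parent_lt (hreach : ∀ i, ∃ k, π^[k] i = r) {i : n} (hi : i ≠ r) :
    rootDepth hreach (π i) < rootDepth hreach i := by
  have hpos : rootDepth hreach i ≠ 0 := fun h => hi (by simpa [h] using iterate_rootDepth hreach i)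
  have : π^[rootDepth hreach i - 1] (π i) = r := by
    rw [← iterate_succ_apply, Nat.succ_eq_add_one, Nat.sub_add_cancel (Nat.pos_of_ne_zero hpos)]
    exact iterate_rootDepth hreach i
  exact lt_of_le_of_lt (Nat.find_min' _ this) (by omega)

theorem eq_root_of_parent_eq_self (hreach : ∀ i, ∃ k, π^[k] i = r) {i : n} (hi : π i = i) :
    i = r := by
  by_contra h
  exact (rootDepth_parent_lt hreach h).ne (by rw [hi])

theorem iterate_eq_root_of_rootDepth_le (hr : π r = r) (hreach : ∀ i, ∃ k, π^[k] i = r)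
    {i : n} {t : ℕ} (ht : rootDepth hreach i ≤ t) : π^[t] i = r := by
  rw [← Nat.sub_add_cancel ht, iterate_add_apply, iterate_rootDepth, iterate_fixed hr]

theorem blockTriangular_transpose_funMatrix [LinearOrder n] {R : Type*} [Zero R] [One R]
    (hr : π r = r) (hreach : ∀ i, ∃ k, π^[k] i = r) :
    (funMatrix R π)ᵀ.BlockTriangular fun i => toLex (rootDepth hreach i, i) := by
  intro i j hji
  simp only [transpose_apply, funMatrix, of_apply, ite_eq_right_iff]
  rintro rfl
  rw [Prod.Lex.toLex_lt_toLex] at hji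
  rcases eq_or_ne j r with rfl | hj
  · rw [hr] at hji
    simp at hji
  · have := rootDepth_parent_lt hreach hj
    omega

end RootDepth

section RootedTree

variable {n R : Type*} [Fintype n] [DecidableEq n] {π : n → n} {r : n}

theorem charpoly_funMatrix_of_rooted [LinearOrder n] [CommRing R] (hr : π r = r)
    (hreach : ∀ i, ∃ k, π^[k] i = r) :
    (funMatrix R π).charpoly = X ^ (Fintype.card n - 1) * (X - 1) := by
  have hkey : Injective fun i => toLex (rootDepth hreach i, i) :=
    fun i j h => (Prod.ext_iff.1 (toLex.injective h)).2
  have hdiag (i : n) : X - C ((funMatrix R π)ᵀ i i) = if i = r then X - 1 else X := by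
    rcases eq_or_ne i r with rfl | hi
    · simp [funMatrix, hr]
    · have : π i ≠ i := mt (eq_root_of_parent_eq_self hreach) hi
      simp [funMatrix, hi, this.symm]
  rw [← charpoly_transpose,
    (blockTriangular_transpose_funMatrix hr hreach).charpoly_of_injective hkey,
    Finset.prod_congr rfl fun i _ => hdiag i, Fintype.prod_eq_mul_prod_compl r,
    if_pos rfl, Finset.prod_congr rfl (g := fun _ => X) fun i hi => if_neg (by simpa using hi),
    Finset.prod_const, Finset.card_compl, Finset.card_singleton, mul_comm]

theorem funMatrix_pow_mulVec_eq_const_of_rooted [Semiring R] (hr : π r = r)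
    (hreach : ∀ i, ∃ k, π^[k] i = r) (x : n → R) :
    ∃ T, ∀ t ≥ T, funMatrix R π ^ t *ᵥ x = x r • 1 := by
  refine ⟨Finset.univ.sup (rootDepth hreach), fun t ht => funext fun i => ?_⟩
  have : rootDepth hreach i ≤ t := (Finset.le_sup (Finset.mem_univ i)).trans ht
  simp [funMatrix_pow_mulVec, iterate_eq_root_of_rootDepth_le hr hreach this]

end RootedTree

theorem finiteField_consensus_spanning_tree_general
    (p n : ℕ)
    (π : Fin n → Fin n) (r : Fin n)
    (hr : π r = r) (hreach : ∀ i : Fin n, ∃ k : ℕ, π^[k] i = r)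
    (A : Matrix (Fin n) (Fin n) (ZMod p))
    (hAdef : A = Matrix.of fun i j => if j = π i then (1 : ZMod p) else 0) :
    A *ᵥ (1 : Fin n → ZMod p) = 1 ∧
    A.charpoly = X ^ (n - 1) * (X - 1) ∧
    (∀ x0 : Fin n → ZMod p, ∃ T : ℕ, ∃ α : ZMod p,
      ∀ t ≥ T, (A ^ t) *ᵥ x0 = α • (1 : Fin n → ZMod p)) := by
  change A = funMatrix (ZMod p) π at hAdef
  subst hAdef
  refine ⟨funMatrix_mulVec_one π, ?_, fun x0 => ?_⟩
  · simpa using charpoly_funMatrix_of_rooted (R := ZMod p) hr hreach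
  · obtain ⟨T, hT⟩ := funMatrix_pow_mulVec_eq_const_of_rooted hr hreach x0
    exact ⟨T, x0 r, hT⟩

/-- Rooted spanning tree construction: if `π` is a parent map whose functional
graph is a tree rooted at `r` (with `π r = r` and every vertex eventually
reaching `r` under iteration), then the 0/1 matrix `A` with `A i j = 1` iff
`j = π i` is row-stochastic, has characteristic polynomial `X^(n-1) * (X-1)`,
and achieves consensus over `ZMod p`. -/
theorem finiteField_consensus_spanning_tree
    (p n : ℕ) [Fact p.Prime] (hn : 1 ≤ n)
    (π : Fin n → Fin n) (r : Fin n)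
    (hr : π r = r) (hreach : ∀ i : Fin n, ∃ k : ℕ, π^[k] i = r)
    (A : Matrix (Fin n) (Fin n) (ZMod p))
    (hAdef : A = Matrix.of fun i j => if j = π i then (1 : ZMod p) else 0) :
    A *ᵥ (1 : Fin n → ZMod p) = 1 ∧
    A.charpoly = X ^ (n - 1) * (X - 1) ∧
    (∀ x0 : Fin n → ZMod p, ∃ T : ℕ, ∃ α : ZMod p,
      ∀ t ≥ T, (A ^ t) *ᵥ x0 = α • (1 : Fin n → ZMod p)) :=
  finiteField_consensus_spanning_tree_general p n π r hr hreach A hAdef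
end

section
/- Let p be a prime and n ≥ 1 with p not dividing n. Let A be an n×n matrix over F_p = ZMod p that achieves average consensus (A is row-stochastic, 𝟙ᵀ A = 𝟙ᵀ, and its characteristic polynomial is X^{n−1}(X−1)). Let B be an m×n matrix over F_p with B 𝟙 = 0, let L be an n×m matrix over F_p with L · B = I − A, fix v ∈ F_p^n and set η = B v. Then for every initial state x(0) ∈ F_p^n, the iteration x(t+1) = A x(t) + L η converges in finite time: there exist T < n and x̃ ∈ F_p^n such that x(t) = x̃ for all t ≥ T, and the limit is compatible with the measurements: B x̃ = η (equivalently, x̃ − v is a constant vector). -/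
open Matrix Polynomial

/-! Cayley–Hamilton gives `A ^ n = A ^ (n - 1)`, so the error `x t - v = A ^ t *ᵥ (x 0 - v)` is
frozen from `t = n - 1` on. Its final value is fixed by `A`, and since `1` is a simple root of the
characteristic polynomial, the eigenspace of `1` is spanned by `𝟙`. Hence the limit differs from
`v` by a constant vector, which `B` annihilates. -/

theorem pow_eq_pow_of_pow_succ_eq {M : Type*} [Monoid M] {a : M} {k t : ℕ}
    (h : a ^ (k + 1) = a ^ k) (hkt : k ≤ t) : a ^ t = a ^ k := by
  induction t, hkt using Nat.le_induction with
  | base => rfl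
  | succ t _ ih => rw [pow_succ, ih, ← pow_succ, h]

theorem Polynomial.rootMultiplicity_one_X_pow_mul_X_sub_one {R : Type*} [CommRing R] [IsDomain R]
    (k : ℕ) : (X ^ k * (X - 1) : R[X]).rootMultiplicity 1 = 1 := by
  rw [← C_1, rootMultiplicity_mul (mul_ne_zero (pow_ne_zero _ X_ne_zero) (X_sub_C_ne_zero 1)),
    rootMultiplicity_X_sub_C_self, rootMultiplicity_eq_zero (by simp)]

namespace Matrix

variable {ι K : Type*} [Fintype ι] [DecidableEq ι]

theorem pow_succ_eq_pow_of_charpoly_eq [CommRing K] {A : Matrix ι ι K} {k : ℕ}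
    (h : A.charpoly = X ^ k * (X - 1)) : A ^ (k + 1) = A ^ k := by
  have hCH := A.aeval_self_charpoly
  rw [h, map_mul, map_pow, map_sub, aeval_X, map_one, mul_sub, mul_one, sub_eq_zero] at hCH
  rwa [pow_succ]

theorem exists_smul_eq_of_rootMultiplicity_le_one [Field K] {A : Matrix ι ι K} {μ : K}
    (hμ : A.charpoly.rootMultiplicity μ ≤ 1) {u w : ι → K} (hu0 : u ≠ 0)
    (hu : A *ᵥ u = μ • u) (hw : A *ᵥ w = μ • w) : ∃ c : K, c • u = w := by
  set E := Module.End.eigenspace (toLin' A) μ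
  have huE : u ∈ E := Module.End.mem_eigenspace_iff.2 (by simpa using hu)
  have hwE : w ∈ E := Module.End.mem_eigenspace_iff.2 (by simpa using hw)
  have hu0' : (⟨u, huE⟩ : E) ≠ 0 := by simpa using hu0
  have hE : Module.finrank K E = 1 :=
    le_antisymm ((LinearMap.finrank_eigenspace_le _ μ).trans (by rwa [charpoly_toLin']))
      (Module.finrank_pos_iff_exists_ne_zero.2 ⟨_, hu0'⟩)
  obtain ⟨c, hc⟩ := (finrank_eq_one_iff_of_nonzero' _ hu0').1 hE ⟨w, hwE⟩
  exact ⟨c, congrArg Subtype.val hc⟩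

theorem affine_iterate_eq_add_pow_mulVec [CommRing K] (A : Matrix ι ι K) (v : ι → K)
    (x : ℕ → ι → K) (hx : ∀ t, x (t + 1) = A *ᵥ x t + (v - A *ᵥ v)) (t : ℕ) :
    x t = v + A ^ t *ᵥ (x 0 - v) := by
  induction t with
  | zero => simp
  | succ t ih =>
    rw [hx, ih, pow_succ', ← mulVec_mulVec, mulVec_add, mulVec_sub]
    abel

end Matrix

theorem finiteField_pose_estimation_noiseless_general
    (p n m : ℕ) [Fact p.Prime] (hn : 1 ≤ n)
    (A : Matrix (Fin n) (Fin n) (ZMod p))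
    (hrow : A *ᵥ (1 : Fin n → ZMod p) = 1)
    (hchar : A.charpoly = X ^ (n - 1) * (X - 1))
    (B : Matrix (Fin m) (Fin n) (ZMod p))
    (hB : B *ᵥ (1 : Fin n → ZMod p) = 0)
    (L : Matrix (Fin n) (Fin m) (ZMod p))
    (hL : L * B = 1 - A)
    (v : Fin n → ZMod p)
    (x : ℕ → Fin n → ZMod p)
    (hx : ∀ t : ℕ, x (t + 1) = A *ᵥ x t + L *ᵥ (B *ᵥ v)) :
    ∃ T : ℕ, T < n ∧ ∃ xtilde : Fin n → ZMod p,
      (∀ t ≥ T, x t = xtilde) ∧ B *ᵥ xtilde = B *ᵥ v := by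
  have : NeZero n := ⟨by omega⟩
  have hstep : L *ᵥ (B *ᵥ v) = v - A *ᵥ v := by
    rw [mulVec_mulVec, hL, sub_mulVec, one_mulVec]
  have hclosed := A.affine_iterate_eq_add_pow_mulVec v x (hstep ▸ hx)
  have hstab := pow_succ_eq_pow_of_charpoly_eq hchar
  set e := A ^ (n - 1) *ᵥ (x 0 - v)
  have he : A *ᵥ e = (1 : ZMod p) • e := by
    rw [one_smul, mulVec_mulVec, ← pow_succ', hstab]
  obtain ⟨c, hc⟩ := exists_smul_eq_of_rootMultiplicity_le_one
    (hchar ▸ rootMultiplicity_one_X_pow_mul_X_sub_one (n - 1)).le one_ne_zero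
    (by rw [one_smul, hrow]) he
  refine ⟨n - 1, by omega, v + e, fun t ht => ?_, ?_⟩
  · rw [hclosed, pow_eq_pow_of_pow_succ_eq hstab ht]
  · rw [mulVec_add, ← hc, mulVec_smul, hB, smul_zero, add_zero]

/-- Distributed pose estimation with perfect measurements: if `A` achieves
average consensus over `ZMod p` (row-stochastic, column-stochastic, with
characteristic polynomial `X^(n-1)(X-1)`), `B 𝟙 = 0`, `L * B = I - A`, and the
measurements are `η = B *ᵥ v`, then the iteration
`x(t+1) = A x(t) + L η` converges in finite time `T < n` to a configuration
`x̃` compatible with the measurements: `B *ᵥ x̃ = η`. -/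
theorem finiteField_pose_estimation_noiseless
    (p n m : ℕ) [Fact p.Prime] (hn : 1 ≤ n) (hpn : ¬ p ∣ n)
    (A : Matrix (Fin n) (Fin n) (ZMod p))
    (hrow : A *ᵥ (1 : Fin n → ZMod p) = 1)
    (hcol : (1 : Fin n → ZMod p) ᵥ* A = 1)
    (hchar : A.charpoly = X ^ (n - 1) * (X - 1))
    (B : Matrix (Fin m) (Fin n) (ZMod p))
    (hB : B *ᵥ (1 : Fin n → ZMod p) = 0)
    (L : Matrix (Fin n) (Fin m) (ZMod p))
    (hL : L * B = 1 - A)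
    (v : Fin n → ZMod p)
    (x : ℕ → Fin n → ZMod p)
    (hx : ∀ t : ℕ, x (t + 1) = A *ᵥ x t + L *ᵥ (B *ᵥ v)) :
    ∃ T : ℕ, T < n ∧ ∃ xtilde : Fin n → ZMod p,
      (∀ t ≥ T, x t = xtilde) ∧ B *ᵥ xtilde = B *ᵥ v :=
  finiteField_pose_estimation_noiseless_general p n m hn A hrow hchar B hB L hL v x hx
end
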